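/- arXiv:2102.11817 — 3 statements merged into one kernel-verified Lean document; each statement's English description precedes it below -/
import Mathlib

section
/- Let K be a field of characteristic zero, d > 1, and ζ a primitive d-th root of unity. For integers m_v, m_w (both nonzero) and ℓ ≥ 1, set p_e(t) = (t^{m_v} - 1)(t^{m_w} - 1) and q_e(t) = q_ℓ(t^{m_v + m_w}) where q_ℓ(x) = ∑_{i=0}^{ℓ-1} x^i. Then the multiplicity of ζ as a root of p_e(t)·q_e(t) is at most 2. -/
open LaurentPolynomial

section Aux

variable {R : Type*} [Field R]

open Polynomial in
private lemma aux_mult_transfer (ζ : R) (hζ0 : ζ ≠ 0) (F : R[T;T⁻¹]) (P : R[X]) (k : ℤ) (u : R)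
    (hP : Polynomial.toLaurent P = LaurentPolynomial.C u * (F * T k)) (hP0 : P ≠ 0) {n : ℕ}
    (hdvd : (T 1 - LaurentPolynomial.C ζ) ^ n ∣ F) :
    n ≤ P.rootMultiplicity ζ := by
  obtain ⟨G, hG⟩ := hdvd
  obtain ⟨M, Q, hQ⟩ := exists_T_pow (LaurentPolynomial.C u * (G * T k))
  have h1 : Polynomial.toLaurent (X - Polynomial.C ζ) = T 1 - LaurentPolynomial.C ζ := by
    simp [Polynomial.toLaurent_X, Polynomial.toLaurent_C]
  have key : Polynomial.toLaurent (P * X ^ M) =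
      Polynomial.toLaurent ((X - Polynomial.C ζ) ^ n * Q) := by
    rw [map_mul, Polynomial.toLaurent_X_pow, map_mul, map_pow, h1, hQ, hP, hG]
    ring
  have key2 : P * X ^ M = (X - Polynomial.C ζ) ^ n * Q := Polynomial.toLaurent_injective key
  have hne : P * X ^ M ≠ 0 := mul_ne_zero hP0 (pow_ne_zero _ X_ne_zero)
  have hle : n ≤ (P * X ^ M).rootMultiplicity ζ :=
    (Polynomial.le_rootMultiplicity_iff hne).2 ⟨Q, key2⟩
  rw [Polynomial.rootMultiplicity_mul hne] at hle
  have hz : Polynomial.rootMultiplicity ζ ((X : R[X]) ^ M) = 0 :=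
    Polynomial.rootMultiplicity_eq_zero
      (by intro h; exact pow_ne_zero M hζ0 (by simpa using h))
  omega

open Polynomial in
private lemma aux_rep1 (m : ℤ) : ∃ (k : ℤ) (u : R), u ≠ 0 ∧
    Polynomial.toLaurent ((X : R[X]) ^ m.natAbs - 1) =
      LaurentPolynomial.C u * ((T m - 1) * T k) := by
  rcases le_or_gt 0 m with hm | hm
  · refine ⟨0, 1, one_ne_zero, ?_⟩
    have : ((m.natAbs : ℤ)) = m := Int.natAbs_of_nonneg hm
    simp [map_sub, Polynomial.toLaurent_X_pow, this]
  · refine ⟨(m.natAbs : ℤ), -1, by norm_num, ?_⟩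
    have h : m + (m.natAbs : ℤ) = 0 := by omega
    simp only [map_sub, map_one, Polynomial.toLaurent_X_pow, map_neg, sub_mul, one_mul,
      ← T_add, h, T_zero]
    ring

open Polynomial in
private lemma aux_repS (s : ℤ) (hs : s ≠ 0) (ℓ : ℕ) :
    ∃ k : ℤ, Polynomial.toLaurent (∑ i ∈ Finset.range ℓ, ((X : R[X]) ^ s.natAbs) ^ i)
      = (∑ i ∈ Finset.range ℓ, (T s : R[T;T⁻¹]) ^ i) * T k := by
  obtain ⟨c, hc⟩ : ∃ c : ℕ, s.natAbs = c := ⟨s.natAbs, rfl⟩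
  rw [hc]
  rcases hs.lt_or_gt with hneg | hpos
  · refine ⟨(c : ℤ) * ((ℓ - 1 : ℕ) : ℤ), ?_⟩
    rw [Finset.sum_mul, map_sum,
      ← Finset.sum_range_reflect (fun i => Polynomial.toLaurent (((X : R[X]) ^ c) ^ i)) ℓ]
    refine Finset.sum_congr rfl fun i hi => ?_
    rw [Finset.mem_range] at hi
    rw [← pow_mul, Polynomial.toLaurent_X_pow, T_pow, ← T_add]
    congr 1
    have h1 : ((ℓ - 1 - i : ℕ) : ℤ) = (ℓ : ℤ) - 1 - i := by omega
    have h2 : ((ℓ - 1 : ℕ) : ℤ) = (ℓ : ℤ) - 1 := by omega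
    have hsc : s = -(c : ℤ) := by omega
    push_cast [h1, h2]
    rw [hsc]
    ring
  · refine ⟨0, ?_⟩
    rw [T_zero, mul_one, map_sum]
    refine Finset.sum_congr rfl fun i _ => ?_
    rw [← pow_mul, Polynomial.toLaurent_X_pow, T_pow]
    congr 1
    have hsc : s = (c : ℤ) := by omega
    push_cast
    rw [hsc]
    ring

open Polynomial in
private lemma aux_rm_le_one [CharZero R] (ζ : R) (a : ℕ) (ha : a ≠ 0) :
    Polynomial.rootMultiplicity ζ ((X : R[X]) ^ a - 1) ≤ 1 := by
  have hsep : ((X : R[X]) ^ a - 1).Separable := by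
    have := Polynomial.separable_X_pow_sub_C (1 : R)
      (Nat.cast_ne_zero.mpr ha) one_ne_zero
    simpa using this
  exact Polynomial.rootMultiplicity_le_one_of_separable hsep ζ

end Aux

/-- Multiplicity of a primitive `d`-th root of unity `ζ` (in the algebraic closure of a
characteristic-zero field `K`) as a root of `p_e(t)·q_e(t)`, where
`p_e(t) = (t^{m_v}-1)(t^{m_w}-1)` and `q_e(t) = q_ℓ(t^{m_v+m_w})` (as Laurent polynomials),
is at most `2`:  `(t - ζ)^n` divides the product only when `n ≤ 2`. -/
theorem stmt_2 (K : Type*) [Field K] [CharZero K] (d : ℕ) (hd : 1 < d)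
    (ζ : AlgebraicClosure K) (hζ : IsPrimitiveRoot ζ d)
    (mv mw : ℤ) (hmv : mv ≠ 0) (hmw : mw ≠ 0) (ℓ : ℕ) (hℓ : 1 ≤ ℓ) :
    ∀ n : ℕ,
      ((T 1 - C ζ) ^ n ∣
        ((T mv - 1) * (T mw - 1) *
          ∑ i ∈ Finset.range ℓ, (T (mv + mw) : LaurentPolynomial (AlgebraicClosure K)) ^ i)) →
      n ≤ 2 := by
  intro n hdvd
  have hd0 : d ≠ 0 := by omega
  have hζ0 : ζ ≠ 0 := hζ.ne_zero hd0
  obtain ⟨k1, u1, hu1, h1⟩ := aux_rep1 (R := AlgebraicClosure K) mv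
  obtain ⟨k2, u2, hu2, h2⟩ := aux_rep1 (R := AlgebraicClosure K) mw
  set a := mv.natAbs with hadef
  set b := mw.natAbs with hbdef
  have ha : a ≠ 0 := Int.natAbs_ne_zero.mpr hmv
  have hb : b ≠ 0 := Int.natAbs_ne_zero.mpr hmw
  have hA0 : ((Polynomial.X : Polynomial (AlgebraicClosure K)) ^ a - 1) ≠ 0 := by
    intro h
    have := congrArg (Polynomial.eval 0) h
    simp [zero_pow ha] at this
  have hB0 : ((Polynomial.X : Polynomial (AlgebraicClosure K)) ^ b - 1) ≠ 0 := by
    intro h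
    have := congrArg (Polynomial.eval 0) h
    simp [zero_pow hb] at this
  have hr1 : Polynomial.rootMultiplicity ζ ((Polynomial.X : Polynomial (AlgebraicClosure K)) ^ a - 1) ≤ 1 :=
    aux_rm_le_one ζ a ha
  have hr2 : Polynomial.rootMultiplicity ζ ((Polynomial.X : Polynomial (AlgebraicClosure K)) ^ b - 1) ≤ 1 :=
    aux_rm_le_one ζ b hb
  rcases eq_or_ne (mv + mw) 0 with hs | hs
  · -- the geometric sum is the constant ℓ
    have hS : (∑ i ∈ Finset.range ℓ, (T (mv + mw) : (AlgebraicClosure K)[T;T⁻¹]) ^ i)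
        = LaurentPolynomial.C ((ℓ : AlgebraicClosure K)) := by
      rw [hs]
      simp [T_zero, map_natCast]
    set P : Polynomial (AlgebraicClosure K) := ((Polynomial.X) ^ a - 1) * ((Polynomial.X) ^ b - 1) *
      Polynomial.C ((ℓ : AlgebraicClosure K)) with hPdef
    have hCl0 : (Polynomial.C ((ℓ : AlgebraicClosure K)) : Polynomial (AlgebraicClosure K)) ≠ 0 := by
      simp [Nat.cast_ne_zero]
      omega
    have hP0 : P ≠ 0 := mul_ne_zero (mul_ne_zero hA0 hB0) hCl0
    have hrep : Polynomial.toLaurent P = LaurentPolynomial.C (u1 * u2) *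
        (((T mv - 1) * (T mw - 1) *
          ∑ i ∈ Finset.range ℓ, (T (mv + mw) : (AlgebraicClosure K)[T;T⁻¹]) ^ i) * T (k1 + k2)) := by
      rw [hPdef, map_mul, map_mul, h1, h2, Polynomial.toLaurent_C, hS, map_mul, T_add k1 k2]
      ring
    have hmain := aux_mult_transfer ζ hζ0 _ P (k1 + k2) (u1 * u2) hrep hP0 hdvd
    rw [hPdef, Polynomial.rootMultiplicity_mul hP0,
      Polynomial.rootMultiplicity_mul (mul_ne_zero hA0 hB0),
      Polynomial.rootMultiplicity_C] at hmain
    omega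
  · -- mv + mw ≠ 0
    set c := (mv + mw).natAbs with hcdef
    have hc : c ≠ 0 := Int.natAbs_ne_zero.mpr hs
    obtain ⟨k3, h3⟩ := aux_repS (R := AlgebraicClosure K) (mv + mw) hs ℓ
    set P3 : Polynomial (AlgebraicClosure K) := ∑ i ∈ Finset.range ℓ, ((Polynomial.X : Polynomial (AlgebraicClosure K)) ^ c) ^ i
      with hP3def
    have hgeom : P3 * ((Polynomial.X : Polynomial (AlgebraicClosure K)) ^ c - 1) =
        (Polynomial.X : Polynomial (AlgebraicClosure K)) ^ (c * ℓ) - 1 := by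
      rw [hP3def, geom_sum_mul, ← pow_mul]
    have hcl : c * ℓ ≠ 0 := by positivity
    have hCL0 : ((Polynomial.X : Polynomial (AlgebraicClosure K)) ^ (c * ℓ) - 1) ≠ 0 := by
      intro h
      have := congrArg (Polynomial.eval 0) h
      simp [zero_pow hcl] at this
    have hP30 : P3 ≠ 0 := by
      intro h
      rw [h, zero_mul] at hgeom
      exact hCL0 hgeom.symm
    have hdvd3 : P3 ∣ (Polynomial.X : Polynomial (AlgebraicClosure K)) ^ (c * ℓ) - 1 :=
      ⟨_, hgeom.symm⟩
    have hr3 : Polynomial.rootMultiplicity ζ P3 ≤ 1 := by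
      have hmono : Polynomial.rootMultiplicity ζ P3 ≤
          Polynomial.rootMultiplicity ζ ((Polynomial.X : Polynomial (AlgebraicClosure K)) ^ (c * ℓ) - 1) :=
        (Polynomial.le_rootMultiplicity_iff hCL0).2
          (dvd_trans (Polynomial.pow_rootMultiplicity_dvd P3 ζ) hdvd3)
      exact le_trans hmono (aux_rm_le_one ζ (c * ℓ) hcl)
    set P : Polynomial (AlgebraicClosure K) := ((Polynomial.X) ^ a - 1) * ((Polynomial.X) ^ b - 1) * P3 with hPdef
    have hP0 : P ≠ 0 := mul_ne_zero (mul_ne_zero hA0 hB0) hP30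
    have hrep : Polynomial.toLaurent P = LaurentPolynomial.C (u1 * u2) *
        (((T mv - 1) * (T mw - 1) *
          ∑ i ∈ Finset.range ℓ, (T (mv + mw) : (AlgebraicClosure K)[T;T⁻¹]) ^ i) * T (k1 + k2 + k3)) := by
      rw [hPdef, map_mul, map_mul, h1, h2, h3, map_mul, T_add (k1 + k2) k3, T_add k1 k2]
      ring
    have hmain := aux_mult_transfer ζ hζ0 _ P (k1 + k2 + k3) (u1 * u2) hrep hP0 hdvd
    rw [hPdef, Polynomial.rootMultiplicity_mul hP0,
      Polynomial.rootMultiplicity_mul (mul_ne_zero hA0 hB0)] at hmain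
    -- if ζ is a root of P3 then it is not a common root of the two other factors
    rcases Nat.eq_zero_or_pos (Polynomial.rootMultiplicity ζ P3) with h30 | h3pos
    · omega
    · have hroot3 : P3.IsRoot ζ := ((Polynomial.rootMultiplicity_pos hP30).1 h3pos)
      have hev : ∑ i ∈ Finset.range ℓ, (ζ ^ c) ^ i = 0 := by
        simpa [hP3def, Polynomial.eval_finset_sum] using hroot3
      have hζc : ζ ^ c ≠ 1 := by
        intro h
        rw [h] at hev
        simp at hev
        omega
      have key12 : ¬(ζ ^ a = 1 ∧ ζ ^ b = 1) := by
        rintro ⟨e1, e2⟩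
        have d1 : (d : ℤ) ∣ mv :=
          Int.dvd_natAbs.1 (Int.natCast_dvd_natCast.2 ((hζ.pow_eq_one_iff_dvd a).1 e1))
        have d2 : (d : ℤ) ∣ mw :=
          Int.dvd_natAbs.1 (Int.natCast_dvd_natCast.2 ((hζ.pow_eq_one_iff_dvd b).1 e2))
        have d3 : (d : ℤ) ∣ mv + mw := dvd_add d1 d2
        have d4 : d ∣ c := Int.natCast_dvd_natCast.1 (Int.dvd_natAbs.2 d3)
        exact hζc ((hζ.pow_eq_one_iff_dvd c).2 d4)
      have h12 : Polynomial.rootMultiplicity ζ ((Polynomial.X : Polynomial (AlgebraicClosure K)) ^ a - 1) = 0 ∨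
          Polynomial.rootMultiplicity ζ ((Polynomial.X : Polynomial (AlgebraicClosure K)) ^ b - 1) = 0 := by
        by_contra hcon
        push_neg at hcon
        obtain ⟨c1, c2⟩ := hcon
        have r1 : ((Polynomial.X : Polynomial (AlgebraicClosure K)) ^ a - 1).IsRoot ζ :=
          (Polynomial.rootMultiplicity_pos hA0).1 (Nat.pos_of_ne_zero c1)
        have r2 : ((Polynomial.X : Polynomial (AlgebraicClosure K)) ^ b - 1).IsRoot ζ :=
          (Polynomial.rootMultiplicity_pos hB0).1 (Nat.pos_of_ne_zero c2)
        refine key12 ⟨?_, ?_⟩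
        · have := r1
          simpa [sub_eq_zero] using this
        · have := r2
          simpa [sub_eq_zero] using this
      omega
end

section
/- The dihedral Artin group A = ⟨a, b | (ab)² = (ba)²⟩ admits a homomorphism χ : A → ℤ with χ(a) = 1, χ(b) = −1, and its kernel A^χ has a presentation ⟨w_n (n ∈ ℤ) | w_n² = w_0² for all n⟩ where w_n = a^{n+1} b a^{−n}. Consequently, the abelianization of A^χ is isomorphic to the quotient of the free abelian group on generators {w_n : n ∈ ℤ} by the relations 2w_n = 2w_0. -/
/-!
Let `t` act on `P = ⟨w_n (n ∈ ℤ) ∣ w_n² = w_0²⟩` by the shift `w_n ↦ w_{n+1}`. Then `a ↦ t`,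
`b ↦ w_{-1} t⁻¹` is an isomorphism `A ≅ P ⋊ ⟨t⟩` with inverse `w_n ↦ a^{n+1} b a^{-n}`, `t ↦ a`.
Taking `χ` to be the projection onto `⟨t⟩ ≅ ℤ`, its kernel is `P`. Finally, the abelianization of
any presented group is the free abelian group on the generators modulo the abelianized relators.
-/

def FreeGroup.toFreeAbelianGroup {α : Type*} :
    FreeGroup α →* Multiplicative (FreeAbelianGroup α) :=
  FreeGroup.lift fun x => .ofAdd (.of x)

theorem FreeGroup.lift_ofAdd_eq_toFreeAbelianGroup {α B : Type*} [AddCommGroup B]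
    (f : FreeAbelianGroup α →+ B) (r : FreeGroup α) :
    lift (fun x => Multiplicative.ofAdd (f (.of x))) r =
      Multiplicative.ofAdd (f (toFreeAbelianGroup r).toAdd) :=
  DFunLike.congr_fun (ext_hom (lift fun x => Multiplicative.ofAdd (f (.of x)))
    (f.toMultiplicative.comp toFreeAbelianGroup) fun x => by simp [toFreeAbelianGroup]) r

namespace PresentedGroup

variable {α : Type*} (rels : Set (FreeGroup α))

abbrev abelianRelators : AddSubgroup (FreeAbelianGroup α) :=
  AddSubgroup.closure ((fun r => (FreeGroup.toFreeAbelianGroup r).toAdd) '' rels)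

def toAbelianQuotient : Abelianization (PresentedGroup rels) →*
    Multiplicative (FreeAbelianGroup α ⧸ abelianRelators rels) :=
  Abelianization.lift <| toGroup (f := fun x => .ofAdd (QuotientAddGroup.mk' _ (.of x))) <| by
    intro r hr
    rw [FreeGroup.lift_ofAdd_eq_toFreeAbelianGroup, ofAdd_eq_one, QuotientAddGroup.mk'_apply,
      QuotientAddGroup.eq_zero_iff]
    exact AddSubgroup.subset_closure ⟨r, hr, rfl⟩

def ofAbelianQuotient : Multiplicative (FreeAbelianGroup α ⧸ abelianRelators rels) →*
    Abelianization (PresentedGroup rels) :=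
  AddMonoidHom.toMultiplicativeLeft <| QuotientAddGroup.lift _
    (FreeAbelianGroup.lift fun x => .ofMul (Abelianization.of (of x))) <| by
    rw [AddSubgroup.closure_le]
    rintro _ ⟨r, hr, rfl⟩
    have h := FreeGroup.lift_ofAdd_eq_toFreeAbelianGroup
      (FreeAbelianGroup.lift fun x => Additive.ofMul (Abelianization.of (of (rels := rels) x))) r
    have h' : FreeGroup.lift (fun x => Abelianization.of (of x : PresentedGroup rels)) r = 1 := by
      rw [← FreeGroup.lift_unique (f := fun x => Abelianization.of (of x : PresentedGroup rels))
          (Abelianization.of.comp (mk rels)) fun _ => rfl,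
        MonoidHom.comp_apply, one_of_mem hr, map_one]
    simp only [FreeAbelianGroup.lift_apply_of] at h
    exact congrArg Multiplicative.toAdd (h.symm.trans h')

def abelianizationEquiv : Abelianization (PresentedGroup rels) ≃*
    Multiplicative (FreeAbelianGroup α ⧸ abelianRelators rels) :=
  MonoidHom.toMulEquiv (toAbelianQuotient rels) (ofAbelianQuotient rels)
    (Abelianization.hom_ext _ _ <| PresentedGroup.ext fun x => by
      simp [toAbelianQuotient, ofAbelianQuotient])
    (by
      apply AddMonoidHom.toMultiplicative.symm.injective
      apply QuotientAddGroup.addMonoidHom_ext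
      apply FreeAbelianGroup.lift_ext
      intro x
      simp [toAbelianQuotient, ofAbelianQuotient])

end PresentedGroup

namespace SemidirectProduct

variable {G N H : Type*} [Group G] [Group N] [Group H] {φ : H →* MulAut N}

def kerRightHomCompEquiv (e : G ≃* N ⋊[φ] H) : (rightHom.comp e.toMonoidHom).ker ≃* N where
  toFun g := (e g).left
  invFun n := ⟨e.symm (inl n), by simp⟩
  left_inv g := by
    have hg : (e g).right = 1 := g.2
    refine Subtype.ext (show e.symm (inl (e g).left) = g from ?_)
    rw [MulEquiv.symm_apply_eq, ← mul_one (inl _), ← map_one (inr (φ := φ)), ← hg,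
      inl_left_mul_inr_right]
  right_inv n := by simp
  map_mul' g h := by
    have hg : (e g).right = 1 := g.2
    simp only [Subgroup.coe_mul, map_mul, mul_left, hg, map_one, MulAut.one_apply]

@[simp]
theorem coe_kerRightHomCompEquiv_symm (e : G ≃* N ⋊[φ] H) (n : N) :
    ((kerRightHomCompEquiv e).symm n : G) = e.symm (inl n) :=
  rfl

end SemidirectProduct

abbrev equalSquaresRels : Set (FreeGroup ℤ) :=
  {x | ∃ n : ℤ, x = FreeGroup.of n ^ 2 * (FreeGroup.of 0 ^ 2)⁻¹}

abbrev EqualSquares := PresentedGroup equalSquaresRels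

namespace EqualSquares

abbrev w (n : ℤ) : EqualSquares := PresentedGroup.of n

theorem w_sq (n : ℤ) : w n ^ 2 = w 0 ^ 2 := by
  simpa [mul_inv_eq_one, PresentedGroup.of] using
    PresentedGroup.one_of_mem (rels := equalSquaresRels) ⟨n, rfl⟩

variable {G : Type*} [Group G]

def lift (f : ℤ → G) (hf : ∀ n, f n ^ 2 = f 0 ^ 2) : EqualSquares →* G :=
  PresentedGroup.toGroup (f := f) <| by
    rintro _ ⟨n, rfl⟩
    simp [hf]

@[simp]
theorem lift_w (f : ℤ → G) (hf : ∀ n, f n ^ 2 = f 0 ^ 2) (n : ℤ) : lift f hf (w n) = f n :=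
  PresentedGroup.toGroup.of _

def shiftHom (k : ℤ) : EqualSquares →* EqualSquares :=
  lift (fun n => w (n + k)) fun n => by rw [w_sq, w_sq (0 + k)]

@[simp]
theorem shiftHom_w (k n : ℤ) : shiftHom k (w n) = w (n + k) := lift_w ..

theorem shiftHom_add (j k : ℤ) : shiftHom (j + k) = (shiftHom j).comp (shiftHom k) :=
  PresentedGroup.ext fun n => by simp [add_comm j, add_assoc]

theorem shiftHom_zero : shiftHom 0 = MonoidHom.id _ :=
  PresentedGroup.ext fun n => by simp

def shift : Multiplicative ℤ →* MulAut EqualSquares where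
  toFun k := MonoidHom.toMulEquiv (shiftHom k.toAdd) (shiftHom (-k.toAdd))
    (by rw [← shiftHom_add, neg_add_cancel, shiftHom_zero])
    (by rw [← shiftHom_add, add_neg_cancel, shiftHom_zero])
  map_one' := MulEquiv.ext fun x => by simp [shiftHom_zero]
  map_mul' j k := MulEquiv.ext fun x => by simp [shiftHom_add]

@[simp]
theorem shift_w (k : Multiplicative ℤ) (n : ℤ) : shift k (w n) = w (n + k.toAdd) :=
  shiftHom_w ..

theorem abelianRelators_eq : PresentedGroup.abelianRelators equalSquaresRels =
    AddSubgroup.closure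
      {x | ∃ n : ℤ, x = 2 • FreeAbelianGroup.of n - 2 • FreeAbelianGroup.of 0} := by
  rw [PresentedGroup.abelianRelators]
  congr 1
  ext x
  simp only [Set.mem_image, Set.mem_ofPred_eq]
  constructor
  · rintro ⟨_, ⟨n, rfl⟩, rfl⟩
    exact ⟨n, by simp [FreeGroup.toFreeAbelianGroup, sub_eq_add_neg]⟩
  · rintro ⟨n, rfl⟩
    exact ⟨_, ⟨n, rfl⟩, by simp [FreeGroup.toFreeAbelianGroup, sub_eq_add_neg]⟩

end EqualSquares

abbrev dihedralArtinRels : Set (FreeGroup (Fin 2)) :=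
  {(FreeGroup.of 0 * FreeGroup.of 1) ^ 2 * ((FreeGroup.of 1 * FreeGroup.of 0) ^ 2)⁻¹}

abbrev DihedralArtin := PresentedGroup dihedralArtinRels

namespace DihedralArtin

open EqualSquares SemidirectProduct

abbrev a : DihedralArtin := PresentedGroup.of 0
abbrev b : DihedralArtin := PresentedGroup.of 1

theorem ab_sq : (a * b) ^ 2 = (b * a) ^ 2 := by
  simpa [mul_inv_eq_one, PresentedGroup.of] using
    PresentedGroup.one_of_mem (rels := dihedralArtinRels) rfl

theorem commute_a_ab_sq : Commute a ((a * b) ^ 2) := by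
  rw [Commute, SemiconjBy]
  conv_lhs => rw [ab_sq]
  simp only [sq, mul_assoc]

theorem conj_sq (n : ℤ) : (a ^ (n + 1) * b * a ^ (-n)) ^ 2 = (a * b) ^ 2 := by
  calc (a ^ (n + 1) * b * a ^ (-n)) ^ 2 = a ^ n * (a * b) ^ 2 * a ^ (-n) := by rw [sq, sq]; group
    _ = (a * b) ^ 2 := by rw [((commute_a_ab_sq).zpow_left n).eq]; group

variable {G : Type*} [Group G]

def lift (x y : G) (h : (x * y) ^ 2 = (y * x) ^ 2) : DihedralArtin →* G :=
  PresentedGroup.toGroup (f := ![x, y]) <| by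
    rintro _ rfl
    simp [h]

@[simp] theorem lift_a (x y : G) (h) : lift x y h a = x := PresentedGroup.toGroup.of _
@[simp] theorem lift_b (x y : G) (h) : lift x y h b = y := PresentedGroup.toGroup.of _

abbrev Semidirect := EqualSquares ⋊[shift] Multiplicative ℤ

/-- The relation `(ab)² = (ba)²` becomes `w₀² = w₋₁²`, since `ab ↦ w₀` and `ba ↦ w₋₁`. -/
def toSemidirect : DihedralArtin →* Semidirect :=
  lift (inr (.ofAdd 1)) (inl (w (-1)) * inr (.ofAdd (-1))) <| by
    have hab : inr (φ := shift) (.ofAdd 1) * (inl (w (-1)) * inr (.ofAdd (-1))) = inl (w 0) := by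
      ext <;> simp
    have hba : inl (w (-1)) * inr (.ofAdd (-1)) * inr (φ := shift) (.ofAdd 1) = inl (w (-1)) := by
      ext <;> simp
    rw [hab, hba, ← map_pow, ← map_pow, w_sq (-1)]

@[simp] theorem toSemidirect_a : toSemidirect a = inr (.ofAdd 1) := lift_a ..

@[simp] theorem toSemidirect_b : toSemidirect b = inl (w (-1)) * inr (.ofAdd (-1)) := lift_b ..

theorem toSemidirect_a_zpow (k : ℤ) : toSemidirect (a ^ k) = inr (.ofAdd k) := by
  rw [map_zpow, toSemidirect_a, ← map_zpow, ← ofAdd_zsmul, smul_eq_mul, mul_one]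

theorem toSemidirect_conj (n : ℤ) : toSemidirect (a ^ (n + 1) * b * a ^ (-n)) = inl (w n) := by
  simp only [map_mul, toSemidirect_a_zpow, toSemidirect_b]
  ext <;> simp

def ofSemidirect : Semidirect →* DihedralArtin :=
  SemidirectProduct.lift (EqualSquares.lift (fun n => a ^ (n + 1) * b * a ^ (-n))
      fun n => by rw [conj_sq, conj_sq]) (zpowersHom _ a) fun k =>
    PresentedGroup.ext fun n => by
      simp only [MonoidHom.comp_apply, MulEquiv.coe_toMonoidHom, shift_w, EqualSquares.lift_w,
        zpowersHom_apply, MulAut.conj_apply]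
      group

def semidirectEquiv : DihedralArtin ≃* Semidirect :=
  MonoidHom.toMulEquiv toSemidirect ofSemidirect
    (PresentedGroup.ext fun i => by fin_cases i <;> simp [toSemidirect, ofSemidirect])
    (SemidirectProduct.hom_ext
      (PresentedGroup.ext fun n => by simpa [ofSemidirect] using toSemidirect_conj n)
      (MonoidHom.ext_mint (by simp [toSemidirect, ofSemidirect])))

def χ : DihedralArtin →* Multiplicative ℤ := rightHom.comp semidirectEquiv.toMonoidHom

theorem χ_a : χ a = .ofAdd 1 := by simp [χ, semidirectEquiv, toSemidirect]

theorem χ_b : χ b = .ofAdd (-1) := by simp [χ, semidirectEquiv, toSemidirect]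

def kerEquiv : EqualSquares ≃* χ.ker := (kerRightHomCompEquiv semidirectEquiv).symm

theorem coe_kerEquiv_w (n : ℤ) :
    (kerEquiv (w n) : DihedralArtin) = a ^ (n + 1) * b * a ^ (-n) :=
  (coe_kerRightHomCompEquiv_symm semidirectEquiv (w n)).trans
    (by simp [semidirectEquiv, ofSemidirect])

end DihedralArtin

/-- The dihedral Artin group `A = ⟨a, b ∣ (ab)² = (ba)²⟩` admits a homomorphism `χ : A → ℤ`
with `χ(a) = 1`, `χ(b) = −1`; its kernel is isomorphic to the group presented as
`⟨w_n (n ∈ ℤ) ∣ w_n² = w_0²⟩` via `w_n ↦ a^{n+1} b a^{−n}`; and consequently the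
abelianization of `ker χ` is the quotient of the free abelian group on `{w_n : n ∈ ℤ}` by
the relations `2w_n = 2w_0`. -/
theorem stmt_13 :
    ∃ χ : PresentedGroup
        ({(FreeGroup.of (0 : Fin 2) * FreeGroup.of 1) ^ 2 *
          ((FreeGroup.of 1 * FreeGroup.of 0) ^ 2)⁻¹} : Set (FreeGroup (Fin 2))) →*
        Multiplicative ℤ,
      χ (PresentedGroup.of 0) = Multiplicative.ofAdd 1 ∧
      χ (PresentedGroup.of 1) = Multiplicative.ofAdd (-1) ∧
      (∃ e : PresentedGroup
            ({x | ∃ n : ℤ, x = FreeGroup.of n ^ 2 * (FreeGroup.of 0 ^ 2)⁻¹} :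
              Set (FreeGroup ℤ)) ≃* χ.ker,
        ∀ n : ℤ,
          ((e (PresentedGroup.of n) : χ.ker) :
              PresentedGroup
                ({(FreeGroup.of (0 : Fin 2) * FreeGroup.of 1) ^ 2 *
                  ((FreeGroup.of 1 * FreeGroup.of 0) ^ 2)⁻¹} : Set (FreeGroup (Fin 2)))) =
            (PresentedGroup.of 0) ^ (n + 1) * PresentedGroup.of 1 *
              (PresentedGroup.of 0) ^ (-n)) ∧
      Nonempty
        (Abelianization χ.ker ≃*
          Multiplicative
            (FreeAbelianGroup ℤ ⧸
              AddSubgroup.closure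
                {x | ∃ n : ℤ,
                  x = 2 • FreeAbelianGroup.of n - 2 • FreeAbelianGroup.of 0})) := by
  refine ⟨DihedralArtin.χ, DihedralArtin.χ_a, DihedralArtin.χ_b,
    ⟨DihedralArtin.kerEquiv, DihedralArtin.coe_kerEquiv_w⟩, ⟨?_⟩⟩
  rw [← EqualSquares.abelianRelators_eq]
  exact DihedralArtin.kerEquiv.abelianizationCongr.symm.trans
    (PresentedGroup.abelianizationEquiv _)
end

section
/- Let K be a field of characteristic 2 and let G be the group with presentation ⟨w_n (n ∈ ℤ) | w_n² = w_0² for all n ∈ ℤ⟩, with the ℤ-action t·w_n = w_{n+1}. Then H_1(G; K) = G^{ab} ⊗ K is a free K[t^{±1}]-module of rank 1 as a module over the group ring K[t^{±1}] of the acting group ℤ. If instead char K ≠ 2, then H_1(G; K) ≅ K[t^{±1}]/(t−1). -/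
/-!
Sending `x_n ↦ T n` identifies the quotient by the shift relations `T 1 • x_n = x_(n+1)` with
`K[T;T⁻¹]` itself, so the module is `K[T;T⁻¹]` modulo the ideal generated by the images
`2 * (T n - 1)` of the remaining relations. That ideal is zero when `2 = 0`, and it is
`(T 1 - 1)` when `2` is a unit, since `T 1 - 1` divides every `T n - 1`.
-/

open LaurentPolynomial Finsupp

theorem Submodule.ker_mkQ_comp_eq_span_union {R M N : Type*} [Ring R] [AddCommGroup M]
    [Module R M] [AddCommGroup N] [Module R N] (f : M →ₗ[R] N) (A B : Set M)
    (hA : Submodule.span R A = LinearMap.ker f) :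
    LinearMap.ker ((Submodule.span R (f '' B)).mkQ ∘ₗ f) = Submodule.span R (A ∪ B) := by
  rw [LinearMap.ker_comp, Submodule.ker_mkQ, ← Submodule.map_span, Submodule.comap_map_eq,
    Submodule.span_union, hA, sup_comm]

noncomputable def Submodule.quotientSpanUnionEquiv {R M N : Type*} [Ring R] [AddCommGroup M]
    [Module R M] [AddCommGroup N] [Module R N] (f : M →ₗ[R] N) (hf : Function.Surjective f)
    (A B : Set M) (hA : Submodule.span R A = LinearMap.ker f) :
    (M ⧸ Submodule.span R (A ∪ B)) ≃ₗ[R] N ⧸ Submodule.span R (f '' B) :=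
  (Submodule.quotEquivOfEq _ _ (Submodule.ker_mkQ_comp_eq_span_union f A B hA).symm).trans
    (LinearMap.quotKerEquivOfSurjective _ ((Submodule.mkQ_surjective _).comp hf))

namespace LaurentPolynomial

variable {A : Type*} [CommRing A]

def shiftRelations : Set (ℤ →₀ A[T;T⁻¹]) :=
  {y | ∃ n : ℤ, y = (T 1 : A[T;T⁻¹]) • single n (1 : A[T;T⁻¹]) - single (n + 1) 1}

noncomputable def shiftEval : (ℤ →₀ A[T;T⁻¹]) →ₗ[A[T;T⁻¹]] A[T;T⁻¹] :=
  linearCombination A[T;T⁻¹] T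

@[simp]
theorem shiftEval_single (n : ℤ) (c : A[T;T⁻¹]) : shiftEval (single n c) = c * T n := by
  simp [shiftEval]

theorem shiftEval_surjective : Function.Surjective (shiftEval (A := A)) :=
  fun c => ⟨single 0 c, by simp⟩

theorem single_sub_T_smul_single_zero_mem_span_shiftRelations (n : ℤ) :
    single n (1 : A[T;T⁻¹]) - (T n : A[T;T⁻¹]) • single 0 1 ∈
      Submodule.span A[T;T⁻¹] shiftRelations := by
  set x : ℤ → ℤ →₀ A[T;T⁻¹] := fun n => single n 1
  have hrel (n : ℤ) : (T 1 : A[T;T⁻¹]) • x n - x (n + 1) ∈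
      Submodule.span A[T;T⁻¹] shiftRelations := Submodule.subset_span ⟨n, rfl⟩
  induction n using Int.induction_on with
  | zero => simp
  | succ n ih =>
    have h : x (n + 1) - (T (n + 1) : A[T;T⁻¹]) • x 0 =
        (T 1 : A[T;T⁻¹]) • (x n - (T n : A[T;T⁻¹]) • x 0) -
          ((T 1 : A[T;T⁻¹]) • x n - x (n + 1)) := by
      rw [add_comm (n : ℤ), T_add]; module
    exact h ▸ sub_mem (Submodule.smul_mem _ _ ih) (hrel n)
  | pred n ih =>
    have h : x (-n - 1) - (T (-n - 1) : A[T;T⁻¹]) • x 0 =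
        (T (-1) : A[T;T⁻¹]) • (x (-n) - (T (-n) : A[T;T⁻¹]) • x 0) +
          (T (-1) : A[T;T⁻¹]) • ((T 1 : A[T;T⁻¹]) • x (-n - 1) - x (-n - 1 + 1)) := by
      have hT : (T (-n - 1) : A[T;T⁻¹]) = T (-1) * T (-n) := by rw [← T_add]; ring_nf
      have hT1 : (T (-1) : A[T;T⁻¹]) * T 1 = 1 := by rw [← T_add, neg_add_cancel, T_zero]
      rw [sub_add_cancel, hT]
      linear_combination (norm := module) -hT1 • x (-n - 1)
    exact h ▸ add_mem (Submodule.smul_mem _ _ ih) (Submodule.smul_mem _ _ (hrel _))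

theorem span_shiftRelations_eq_ker_shiftEval :
    Submodule.span A[T;T⁻¹] shiftRelations = LinearMap.ker (shiftEval (A := A)) := by
  apply le_antisymm
  · rw [Submodule.span_le]
    rintro _ ⟨n, rfl⟩
    rw [SetLike.mem_coe, LinearMap.mem_ker, map_sub, map_smul, shiftEval_single,
      shiftEval_single, smul_eq_mul, one_mul, one_mul, ← T_add, add_comm, sub_self]
  · have hmem (x : ℤ →₀ A[T;T⁻¹]) :
        x - shiftEval x • single 0 1 ∈ Submodule.span A[T;T⁻¹] shiftRelations := by
      induction x using Finsupp.induction_linear with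
      | zero => simp
      | add x y hx hy =>
        simpa only [map_add, add_smul, add_sub_add_comm] using add_mem hx hy
      | single n c =>
        simpa [smul_sub, smul_smul] using
          Submodule.smul_mem _ c (single_sub_T_smul_single_zero_mem_span_shiftRelations n)
    intro x hx
    simpa [LinearMap.mem_ker.mp hx] using hmem x

theorem T_sub_one_dvd_T_sub_one (n : ℤ) : (T 1 - 1 : A[T;T⁻¹]) ∣ T n - 1 := by
  have hpow (m : ℕ) : (T 1 - 1 : A[T;T⁻¹]) ∣ T m - 1 := by
    simpa [T_pow] using sub_one_dvd_pow_sub_one (T 1 : A[T;T⁻¹]) m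
  obtain ⟨m, rfl | rfl⟩ := n.eq_nat_or_neg
  · exact hpow m
  · have : (T (-m) - 1 : A[T;T⁻¹]) = -T (-m) * (T m - 1) := by
      rw [neg_mul, mul_sub, ← T_add, neg_add_cancel, T_zero]; ring
    exact this ▸ dvd_mul_of_dvd_right (hpow m) _

theorem span_range_two_mul_T_sub_one_of_isUnit (h2 : IsUnit (2 : A)) :
    Ideal.span (Set.range fun n : ℤ => 2 * (T n - 1 : A[T;T⁻¹])) = Ideal.span {T 1 - 1} := by
  have h2' : IsUnit (2 : A[T;T⁻¹]) := by
    rw [← map_ofNat (C : A →+* A[T;T⁻¹]) 2]; exact h2.map _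
  apply le_antisymm
  · rw [Ideal.span_le]
    rintro _ ⟨n, rfl⟩
    exact Ideal.mul_mem_left _ _ (Ideal.mem_span_singleton.mpr (T_sub_one_dvd_T_sub_one n))
  · rw [Ideal.span_singleton_le_iff_mem, ← h2'.unit.inv_mul_cancel_left (T 1 - 1 : A[T;T⁻¹])]
    exact Ideal.mul_mem_left _ _ (Ideal.subset_span ⟨1, rfl⟩)

theorem span_range_two_mul_T_sub_one_of_two_eq_zero (h2 : (2 : A) = 0) :
    Ideal.span (Set.range fun n : ℤ => 2 * (T n - 1 : A[T;T⁻¹])) = ⊥ := by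
  have h2' : (2 : A[T;T⁻¹]) = 0 := by rw [← map_ofNat C 2, h2, map_zero]
  simp [h2']

theorem shiftEval_image_two_smul_single_sub_single :
    shiftEval '' {y | ∃ n : ℤ, y = (2 : A[T;T⁻¹]) • (single n (1 : A[T;T⁻¹]) - single 0 1)} =
      Set.range fun n : ℤ => 2 * (T n - 1 : A[T;T⁻¹]) := by
  ext
  simp [eq_comm, mul_sub]

end LaurentPolynomial

/-- Over `R = K[t^{±1}]`, let `M` be the `R`-module with generators `x_n` (`n ∈ ℤ`) and
relations `t·x_n = x_{n+1}` and `2x_n = 2x_0` (the first homology of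
`G = ⟨w_n ∣ w_n² = w_0²⟩` with the shift `ℤ`-action).  If `char K = 2` then `M` is a free
`R`-module of rank `1`; if `char K ≠ 2` then `M ≅ K[t^{±1}]/(t−1)`. -/
theorem stmt_14 (K : Type*) [Field K] :
    (ringChar K = 2 →
      Nonempty
        (((ℤ →₀ LaurentPolynomial K) ⧸
            Submodule.span (LaurentPolynomial K)
              ({y | ∃ n : ℤ, y = (T 1 : LaurentPolynomial K) • Finsupp.single n (1 : LaurentPolynomial K) -
                  Finsupp.single (n + 1) 1} ∪
               {y | ∃ n : ℤ, y = (2 : LaurentPolynomial K) •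
                  (Finsupp.single n (1 : LaurentPolynomial K) - Finsupp.single 0 1)})) ≃ₗ[LaurentPolynomial K]
          LaurentPolynomial K)) ∧
    (ringChar K ≠ 2 →
      Nonempty
        (((ℤ →₀ LaurentPolynomial K) ⧸
            Submodule.span (LaurentPolynomial K)
              ({y | ∃ n : ℤ, y = (T 1 : LaurentPolynomial K) • Finsupp.single n (1 : LaurentPolynomial K) -
                  Finsupp.single (n + 1) 1} ∪
               {y | ∃ n : ℤ, y = (2 : LaurentPolynomial K) •
                  (Finsupp.single n (1 : LaurentPolynomial K) - Finsupp.single 0 1)})) ≃ₗ[LaurentPolynomial K]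
          (LaurentPolynomial K ⧸
            (Ideal.span {T 1 - 1} : Ideal (LaurentPolynomial K))))) := by
  have e := Submodule.quotientSpanUnionEquiv shiftEval shiftEval_surjective shiftRelations
    {y | ∃ n : ℤ, y = (2 : K[T;T⁻¹]) • (single n (1 : K[T;T⁻¹]) - single 0 1)}
    span_shiftRelations_eq_ker_shiftEval
  rw [shiftEval_image_two_smul_single_sub_single] at e
  refine ⟨fun h => ?_, fun h => ?_⟩
  · have : CharP K 2 := ringChar.eq_iff.mp h
    exact ⟨e.trans (Submodule.quotEquivOfEqBot _
      (span_range_two_mul_T_sub_one_of_two_eq_zero CharTwo.two_eq_zero))⟩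
  · exact ⟨e.trans (Submodule.quotEquivOfEq _ _
      (span_range_two_mul_T_sub_one_of_isUnit (Ring.two_ne_zero h).isUnit))⟩
end
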